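/- arXiv:2309.14189 — 2 statements merged into one kernel-verified Lean document; each statement's English description precedes it below -/
import Mathlib

section
/- (Intermediate curl estimate, Lemma 4.4 of the paper, abstract version.) In the abstract Galerkin setting, with e = E − E_h, θ₀ = (I − Π)e, θ_Π = Πe, η = E − P(E), one has ‖Aθ₀‖² ≤ |||(I − Π)η|||² + (2γ_div + 3γ_app²)|||e|||² + 2γ_div ω²‖θ_Π‖², where |||·||| is the energy norm and γ_app, γ_div are the approximation and divergence conformity factors. -/
open scoped RealInnerProductSpace

noncomputable section

variable {H V : Type*} [NormedAddCommGroup H] [InnerProductSpace ℝ H]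
  [AddCommGroup V] [Module ℝ V]

/-- The Maxwell-type bilinear form `b(v,w) = -ω²(v,w)_H + (Av,Aw)_H`. -/
def bform (ι A : V →ₗ[ℝ] H) (ω : ℝ) (v w : V) : ℝ :=
  -ω ^ 2 * ⟪ι v, ι w⟫ + ⟪A v, A w⟫

/-- The energy inner product `b⁺(v,w) = ω²(v,w)_H + (Av,Aw)_H`. -/
def bplus (ι A : V →ₗ[ℝ] H) (ω : ℝ) (v w : V) : ℝ :=
  ω ^ 2 * ⟪ι v, ι w⟫ + ⟪A v, A w⟫

/-- The energy norm `|||v||| = (ω²‖v‖² + ‖Av‖²)^{1/2}`. -/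
def tnorm (ι A : V →ₗ[ℝ] H) (ω : ℝ) (v : V) : ℝ :=
  Real.sqrt (ω ^ 2 * ‖ι v‖ ^ 2 + ‖A v‖ ^ 2)

lemma cs2 (a b c d : ℝ) :
    a * c + b * d ≤ Real.sqrt (a ^ 2 + b ^ 2) * Real.sqrt (c ^ 2 + d ^ 2) := by
  calc a * c + b * d ≤ |a * c + b * d| := le_abs_self _
    _ = Real.sqrt ((a * c + b * d) ^ 2) := (Real.sqrt_sq_eq_abs _).symm
    _ ≤ Real.sqrt ((a ^ 2 + b ^ 2) * (c ^ 2 + d ^ 2)) :=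
        Real.sqrt_le_sqrt (by nlinarith [sq_nonneg (a * d - b * c)])
    _ = _ := Real.sqrt_mul (by positivity) _

lemma tnorm_nonneg (ι A : V →ₗ[ℝ] H) (ω : ℝ) (v : V) : 0 ≤ tnorm ι A ω v :=
  Real.sqrt_nonneg _

lemma tnorm_sq (ι A : V →ₗ[ℝ] H) (ω : ℝ) (v : V) :
    tnorm ι A ω v ^ 2 = ω ^ 2 * ‖ι v‖ ^ 2 + ‖A v‖ ^ 2 :=
  Real.sq_sqrt (by positivity)

lemma normA_le_tnorm (ι A : V →ₗ[ℝ] H) (ω : ℝ) (v : V) :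
    ‖A v‖ ≤ tnorm ι A ω v := by
  rw [tnorm]
  calc ‖A v‖ = Real.sqrt (‖A v‖ ^ 2) := (Real.sqrt_sq (norm_nonneg _)).symm
    _ ≤ _ := Real.sqrt_le_sqrt (by nlinarith [sq_nonneg (ω * ‖ι v‖)])

lemma bform_le (ι A : V →ₗ[ℝ] H) (ω : ℝ) (v w : V) :
    bform ι A ω v w ≤ tnorm ι A ω v * tnorm ι A ω w := by
  have key := cs2 (ω * ‖ι v‖) ‖A v‖ (ω * ‖ι w‖) ‖A w‖
  have h2 : ⟪A v, A w⟫ ≤ ‖A v‖ * ‖A w‖ := real_inner_le_norm _ _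
  have h1 : -⟪ι v, ι w⟫ ≤ ‖ι v‖ * ‖ι w‖ := by
    have := abs_real_inner_le_norm (ι v) (ι w)
    have := neg_abs_le ⟪ι v, ι w⟫
    linarith
  have h1' : -ω ^ 2 * ⟪ι v, ι w⟫ ≤ (ω * ‖ι v‖) * (ω * ‖ι w‖) := by
    nlinarith [sq_nonneg ω]
  have e1 : (ω * ‖ι v‖) ^ 2 + ‖A v‖ ^ 2 = ω ^ 2 * ‖ι v‖ ^ 2 + ‖A v‖ ^ 2 := by ring
  have e2 : (ω * ‖ι w‖) ^ 2 + ‖A w‖ ^ 2 = ω ^ 2 * ‖ι w‖ ^ 2 + ‖A w‖ ^ 2 := by ring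
  rw [e1, e2] at key
  rw [bform, tnorm, tnorm]
  linarith

lemma bplus_le (ι A : V →ₗ[ℝ] H) (ω : ℝ) (v w : V) :
    bplus ι A ω v w ≤ tnorm ι A ω v * tnorm ι A ω w := by
  have key := cs2 (ω * ‖ι v‖) ‖A v‖ (ω * ‖ι w‖) ‖A w‖
  have h2 : ⟪A v, A w⟫ ≤ ‖A v‖ * ‖A w‖ := real_inner_le_norm _ _
  have h1 : ⟪ι v, ι w⟫ ≤ ‖ι v‖ * ‖ι w‖ := real_inner_le_norm _ _
  have h1' : ω ^ 2 * ⟪ι v, ι w⟫ ≤ (ω * ‖ι v‖) * (ω * ‖ι w‖) := by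
    nlinarith [sq_nonneg ω]
  have e1 : (ω * ‖ι v‖) ^ 2 + ‖A v‖ ^ 2 = ω ^ 2 * ‖ι v‖ ^ 2 + ‖A v‖ ^ 2 := by ring
  have e2 : (ω * ‖ι w‖) ^ 2 + ‖A w‖ ^ 2 = ω ^ 2 * ‖ι w‖ ^ 2 + ‖A w‖ ^ 2 := by ring
  rw [e1, e2] at key
  rw [bplus, tnorm, tnorm]
  linarith

set_option maxHeartbeats 1000000 in
/-- intermediate curl estimate (Lemma 4.4). -/
theorem curl_estimate
    (ι A : V →ₗ[ℝ] H) (ω : ℝ) (hω : 0 < ω)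
    (K : Submodule ℝ H) (hKc : IsClosed (K : Set H))
    (hKV : ∀ v : V, ι v ∈ K ↔ A v = 0)
    (Pi : H →ₗ[ℝ] H) (hPimem : ∀ x : H, Pi x ∈ K)
    (hPifix : ∀ x ∈ K, Pi x = x)
    (hPiorth : ∀ x : H, ∀ y ∈ K, ⟪x - Pi x, y⟫ = 0)
    (Vh : Submodule ℝ V)
    -- energy projection onto Vh
    (P : V →ₗ[ℝ] V) (hPmem : ∀ v : V, P v ∈ Vh)
    (hPorth : ∀ v : V, ∀ wh ∈ Vh, bplus ι A ω (v - P v) wh = 0)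
    -- adjoint problem and approximation factor γapp
    (sol : H → V)
    (hsol : ∀ θ ∈ Kᗮ, ∀ w : V, bform ι A ω w (sol θ) = ⟪ι w, θ⟫)
    (γapp : ℝ) (hγappnn : 0 ≤ γapp)
    (hγapp : ∀ θ ∈ Kᗮ, ‖θ‖ = 1 → ∃ vh ∈ Vh, ω * tnorm ι A ω (sol θ - vh) ≤ γapp)
    -- divergence conformity factor γdiv
    (γdiv : ℝ) (hγdivnn : 0 ≤ γdiv)
    (hγdiv : ∀ vh ∈ Vh, (∀ wh ∈ Vh, A wh = 0 → ⟪ι vh, ι wh⟫ = 0) →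
      ω * ‖Pi (ι vh)‖ ≤ γdiv * ‖A vh‖)
    -- Galerkin setting and decompositions
    (E Eh : V) (hEh : Eh ∈ Vh)
    (hGal : ∀ wh ∈ Vh, bform ι A ω (E - Eh) wh = 0)
    (θPi : V) (hθPi : ι θPi = Pi (ι (E - Eh)))
    (ηPi : V) (hηPi : ι ηPi = Pi (ι (E - P E))) :
    ‖A (E - Eh - θPi)‖ ^ 2 ≤ tnorm ι A ω (E - P E - ηPi) ^ 2
      + (2 * γdiv + 3 * γapp ^ 2) * tnorm ι A ω (E - Eh) ^ 2
      + 2 * γdiv * (ω ^ 2 * ‖ι θPi‖ ^ 2) := by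
  have hte0 := tnorm_nonneg ι A ω (E - Eh)
  -- A θPi = 0 and A ηPi = 0
  have hAθPi : A θPi = 0 := by
    rw [← hKV]; rw [hθPi]; exact hPimem _
  have hAηPi : A ηPi = 0 := by
    rw [← hKV]; rw [hηPi]; exact hPimem _
  -- membership facts
  have hpK : ι θPi ∈ K := by rw [hθPi]; exact hPimem _
  have hqK : ι ηPi ∈ K := by rw [hηPi]; exact hPimem _
  have hd : P E - Eh ∈ Vh := Vh.sub_mem (hPmem E) hEh
  -- linear identities
  have hιd : ι (P E - Eh) = ι (E - Eh) - ι (E - P E) := by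
    rw [← map_sub]; congr 1; abel
  have hAd : A (P E - Eh) = A (E - Eh) - A (E - P E) := by
    rw [← map_sub]; congr 1; abel
  -- Step A: optimality of the energy projection
  have hEPE : tnorm ι A ω (E - P E) ≤ tnorm ι A ω (E - Eh) := by
    have h0 : bplus ι A ω (E - P E) (P E - Eh) = 0 := hPorth E _ hd
    have h1 : bplus ι A ω (E - P E) (E - P E) = bplus ι A ω (E - P E) (E - Eh) := by
      simp only [bplus, hιd, inner_sub_right, hAd] at h0 ⊢
      linarith
    have h2 := bplus_le ι A ω (E - P E) (E - Eh)
    have h3 : tnorm ι A ω (E - P E) ^ 2 = bplus ι A ω (E - P E) (E - P E) := by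
      rw [tnorm_sq, bplus, real_inner_self_eq_norm_sq, real_inner_self_eq_norm_sq]
    nlinarith [tnorm_nonneg ι A ω (E - P E)]
  -- Step D: H-orthogonality of P E - Eh to discrete kernel
  have hdorth : ∀ wh ∈ Vh, A wh = 0 → ⟪ι (P E - Eh), ι wh⟫ = 0 := by
    intro wh hwh hAwh
    have hω2 : (ω : ℝ) ^ 2 ≠ 0 := by positivity
    have h1 := hGal wh hwh
    have h2 := hPorth E wh hwh
    simp only [bform, bplus, hAwh, inner_zero_right, add_zero] at h1 h2
    have e1 : ⟪ι (E - Eh), ι wh⟫ = 0 := by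
      have h1' : ω ^ 2 * ⟪ι (E - Eh), ι wh⟫ = 0 := by linarith
      exact (mul_eq_zero.mp h1').resolve_left hω2
    have e2 : ⟪ι (E - P E), ι wh⟫ = 0 := by
      have h2' : ω ^ 2 * ⟪ι (E - P E), ι wh⟫ = 0 := by linarith
      exact (mul_eq_zero.mp h2').resolve_left hω2
    rw [hιd, inner_sub_left, e1, e2, sub_zero]
  -- Step E: divergence bound
  have hAd2 : ‖A (P E - Eh)‖ ≤ 2 * tnorm ι A ω (E - Eh) := by
    rw [hAd]
    calc ‖A (E - Eh) - A (E - P E)‖ ≤ ‖A (E - Eh)‖ + ‖A (E - P E)‖ := norm_sub_le _ _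
      _ ≤ 2 * tnorm ι A ω (E - Eh) := by
          have := normA_le_tnorm ι A ω (E - Eh)
          have := normA_le_tnorm ι A ω (E - P E)
          linarith
  have hdiv : ω * ‖Pi (ι (P E - Eh))‖ ≤ γdiv * (2 * tnorm ι A ω (E - Eh)) := by
    calc ω * ‖Pi (ι (P E - Eh))‖ ≤ γdiv * ‖A (P E - Eh)‖ := hγdiv _ hd hdorth
      _ ≤ γdiv * (2 * tnorm ι A ω (E - Eh)) := by
          exact mul_le_mul_of_nonneg_left hAd2 hγdivnn
  -- Step F: duality bound
  have hdual : ω * ‖ι (E - Eh) - Pi (ι (E - Eh))‖ ≤ γapp * tnorm ι A ω (E - Eh) := by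
    set θ := ι (E - Eh) - Pi (ι (E - Eh)) with hθdef
    have hθK : θ ∈ Kᗮ := by
      rw [Submodule.mem_orthogonal]
      intro u hu
      rw [real_inner_comm]
      exact hPiorth _ u hu
    by_cases h0 : θ = 0
    · rw [h0, norm_zero, mul_zero]; positivity
    · have hn : (0:ℝ) < ‖θ‖ := norm_pos_iff.mpr h0
      set θh := ‖θ‖⁻¹ • θ with hθhdef
      have hθhK : θh ∈ Kᗮ := Submodule.smul_mem _ _ hθK
      have hθh1 : ‖θh‖ = 1 := by
        rw [hθhdef, norm_smul, norm_inv, norm_norm]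
        field_simp
      obtain ⟨vh, hvh, hvb⟩ := hγapp θh hθhK hθh1
      have hip : ⟪ι (E - Eh), θh⟫ = ‖θ‖ := by
        have h2 : ⟪Pi (ι (E - Eh)), θ⟫ = 0 := by
          rw [real_inner_comm]
          exact hPiorth (ι (E - Eh)) _ (hPimem _)
        have h1 : ⟪ι (E - Eh), θ⟫ = ‖θ‖ ^ 2 := by
          have hxe : ι (E - Eh) = θ + Pi (ι (E - Eh)) := by rw [hθdef]; abel
          rw [hxe, inner_add_left, h2, add_zero, real_inner_self_eq_norm_sq]
        rw [hθhdef, real_inner_smul_right, h1]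
        field_simp
      have hb1 := hsol θh hθhK (E - Eh)
      rw [hip] at hb1
      have hb2 : bform ι A ω (E - Eh) vh = 0 := hGal vh hvh
      have hb3 : bform ι A ω (E - Eh) (sol θh - vh) = ‖θ‖ := by
        simp only [bform, map_sub, inner_sub_right] at hb1 hb2 ⊢
        linarith
      have hcs := bform_le ι A ω (E - Eh) (sol θh - vh)
      rw [hb3] at hcs
      nlinarith [tnorm_nonneg ι A ω (sol θh - vh), hω.le]
  -- rewrite goal
  have hL : A (E - Eh - θPi) = A (E - Eh) := by
    rw [map_sub, hAθPi, sub_zero]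
  have hR2 : A (E - P E - ηPi) = A (E - P E) := by
    rw [map_sub, hAηPi, sub_zero]
  have hR1 : ι (E - P E - ηPi) = ι (E - P E) - ι ηPi := map_sub _ _ _
  rw [hL, tnorm_sq, tnorm_sq, hR1, hR2]
  -- the key identity
  have hGd := hGal (P E - Eh) hd
  rw [bform, hιd, hAd] at hGd
  have o1 : ⟪ι (E - Eh) - ι θPi, ι θPi⟫ = 0 := by
    have := hPiorth (ι (E - Eh)) _ hpK
    rwa [← hθPi] at this
  have o2 : ⟪ι (E - Eh) - ι θPi, ι ηPi⟫ = 0 := by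
    have := hPiorth (ι (E - Eh)) _ hqK
    rwa [← hθPi] at this
  have o3 : ⟪ι (E - P E) - ι ηPi, ι θPi⟫ = 0 := by
    have := hPiorth (ι (E - P E)) _ hpK
    rwa [← hηPi] at this
  have cpx : ⟪ι θPi, ι (E - Eh)⟫ = ⟪ι (E - Eh), ι θPi⟫ := real_inner_comm _ _
  have cpy : ⟪ι θPi, ι (E - P E)⟫ = ⟪ι (E - P E), ι θPi⟫ := real_inner_comm _ _
  have cpq : ⟪ι θPi, ι ηPi⟫ = ⟪ι ηPi, ι θPi⟫ := real_inner_comm _ _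
  have hId : ⟪A (E - Eh), A (E - Eh)⟫ = ⟪A (E - Eh), A (E - P E)⟫
      + ω ^ 2 * ⟪ι (E - Eh) - ι θPi, ι (E - Eh) - ι θPi⟫
      + ω ^ 2 * ⟪ι θPi, ι θPi⟫
      - ω ^ 2 * ⟪ι (E - Eh) - ι θPi, ι (E - P E) - ι ηPi⟫
      - ω ^ 2 * ⟪ι θPi, ι ηPi⟫ := by
    simp only [inner_sub_left, inner_sub_right] at hGd o1 o2 o3 ⊢
    linear_combination hGd + ω ^ 2 * (2 * o1 + cpx - o2 + cpq - o3 - cpy)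
  rw [real_inner_self_eq_norm_sq, real_inner_self_eq_norm_sq,
    real_inner_self_eq_norm_sq] at hId
  -- Cauchy-Schwarz pieces
  have c1 : ⟪A (E - Eh), A (E - P E)⟫ ≤ ‖A (E - Eh)‖ * ‖A (E - P E)‖ :=
    real_inner_le_norm _ _
  have c2 : -⟪ι (E - Eh) - ι θPi, ι (E - P E) - ι ηPi⟫
      ≤ ‖ι (E - Eh) - ι θPi‖ * ‖ι (E - P E) - ι ηPi‖ := by
    have h := abs_real_inner_le_norm (ι (E - Eh) - ι θPi) (ι (E - P E) - ι ηPi)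
    have := neg_abs_le ⟪ι (E - Eh) - ι θPi, ι (E - P E) - ι ηPi⟫
    linarith
  have hpq : ι θPi - ι ηPi = Pi (ι (P E - Eh)) := by
    rw [hθPi, hηPi, ← map_sub, ← hιd]
  have c3 : ‖ι θPi‖ ^ 2 - ⟪ι θPi, ι ηPi⟫ ≤ ‖ι θPi‖ * ‖Pi (ι (P E - Eh))‖ := by
    calc ‖ι θPi‖ ^ 2 - ⟪ι θPi, ι ηPi⟫ = ⟪ι θPi, ι θPi - ι ηPi⟫ := by
          rw [inner_sub_right, real_inner_self_eq_norm_sq]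
      _ = ⟪ι θPi, Pi (ι (P E - Eh))⟫ := by rw [hpq]
      _ ≤ _ := real_inner_le_norm _ _
  -- duality in the right shape
  have hdual' : ω * ‖ι (E - Eh) - ι θPi‖ ≤ γapp * tnorm ι A ω (E - Eh) := by
    rwa [hθPi]
  -- te relation
  have hte2 := tnorm_sq ι A ω (E - Eh)
  -- Young-type pieces
  have y1 : ⟪A (E - Eh), A (E - P E)⟫
      ≤ ‖A (E - Eh)‖ ^ 2 / 2 + ‖A (E - P E)‖ ^ 2 / 2 := by
    nlinarith [c1, sq_nonneg (‖A (E - Eh)‖ - ‖A (E - P E)‖)]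
  have y2 : -(ω ^ 2 * ⟪ι (E - Eh) - ι θPi, ι (E - P E) - ι ηPi⟫)
      ≤ ω ^ 2 * ‖ι (E - Eh) - ι θPi‖ ^ 2 / 2
        + ω ^ 2 * ‖ι (E - P E) - ι ηPi‖ ^ 2 / 2 := by
    nlinarith [mul_le_mul_of_nonneg_left c2 (sq_nonneg ω),
      mul_nonneg (sq_nonneg ω) (sq_nonneg (‖ι (E - Eh) - ι θPi‖ - ‖ι (E - P E) - ι ηPi‖))]
  have y3 : ω ^ 2 * ‖ι (E - Eh) - ι θPi‖ ^ 2 ≤ γapp ^ 2 * tnorm ι A ω (E - Eh) ^ 2 := by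
    have h := mul_self_le_mul_self (mul_nonneg hω.le (norm_nonneg (ι (E - Eh) - ι θPi))) hdual'
    nlinarith [h]
  have y4 : ω ^ 2 * (‖ι θPi‖ ^ 2 - ⟪ι θPi, ι ηPi⟫)
      ≤ γdiv * (ω ^ 2 * ‖ι θPi‖ ^ 2) + γdiv * tnorm ι A ω (E - Eh) ^ 2 := by
    nlinarith [mul_le_mul_of_nonneg_left c3 (sq_nonneg ω),
      mul_le_mul_of_nonneg_left hdiv (mul_nonneg hω.le (norm_nonneg (ι θPi))),
      mul_nonneg hγdivnn (sq_nonneg (ω * ‖ι θPi‖ - tnorm ι A ω (E - Eh)))]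
  have m1 : γdiv * tnorm ι A ω (E - Eh) ^ 2
      = γdiv * (ω ^ 2 * ‖ι (E - Eh)‖ ^ 2) + γdiv * ‖A (E - Eh)‖ ^ 2 := by
    rw [hte2]; ring
  have m2 : γapp ^ 2 * tnorm ι A ω (E - Eh) ^ 2
      = γapp ^ 2 * (ω ^ 2 * ‖ι (E - Eh)‖ ^ 2) + γapp ^ 2 * ‖A (E - Eh)‖ ^ 2 := by
    rw [hte2]; ring
  linarith [hId, y1, y2, y3, y4, m1, m2]
end
end

section
/- (Discrete inf-sup stability, Theorem 4.7 of the paper, abstract version.) In the abstract setting, for every v_h ∈ V_h with |||v_h||| = 1 there exists w_h ∈ V_h with |||w_h||| = 1 such that |b(v_h, w_h)| ≥ (1 − 2(γ_div² + γ_app)) / (1 + 2γ_st), where γ_st is the continuous stability constant, γ_app the approximation factor, and γ_div the divergence conformity factor. -/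
open scoped RealInnerProductSpace

noncomputable section

variable {H V : Type*} [NormedAddCommGroup H] [InnerProductSpace ℝ H]
  [AddCommGroup V] [Module ℝ V]

lemma my_le_of_sq_le_sq {a b : ℝ} (ha : 0 ≤ a) (hb : 0 ≤ b) (h : a ^ 2 ≤ b ^ 2) :
    a ≤ b := by nlinarith

lemma cs_aux {a1 a2 c1 c2 t1 t2 : ℝ} (ha1 : 0 ≤ a1) (ha2 : 0 ≤ a2) (hc1 : 0 ≤ c1)
    (hc2 : 0 ≤ c2) (ht1 : 0 ≤ t1) (ht2 : 0 ≤ t2)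
    (h1 : t1 ^ 2 = a1 ^ 2 + c1 ^ 2) (h2 : t2 ^ 2 = a2 ^ 2 + c2 ^ 2) :
    a1 * a2 + c1 * c2 ≤ t1 * t2 := by
  nlinarith [sq_nonneg (a1 * c2 - c1 * a2), mul_nonneg ht1 ht2,
    mul_nonneg ha1 ha2, mul_nonneg hc1 hc2]

lemma abs_bform_le (ι A : V →ₗ[ℝ] H) {ω : ℝ} (hω : 0 ≤ ω) (v w : V) :
    |bform ι A ω v w| ≤ tnorm ι A ω v * tnorm ι A ω w := by
  have h1 : |bform ι A ω v w| ≤ (ω * ‖ι v‖) * (ω * ‖ι w‖) + ‖A v‖ * ‖A w‖ := by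
    have e1 := abs_real_inner_le_norm (ι v) (ι w)
    have e2 := abs_real_inner_le_norm (A v) (A w)
    have := abs_add_le (-ω ^ 2 * ⟪ι v, ι w⟫) ⟪A v, A w⟫
    rw [abs_mul, abs_neg, abs_of_nonneg (sq_nonneg ω)] at this
    unfold bform
    nlinarith [sq_nonneg ω, abs_nonneg (⟪ι v, ι w⟫), abs_nonneg (⟪A v, A w⟫),
      le_abs_self (⟪A v, A w⟫)]
  refine h1.trans (cs_aux (by positivity) (by positivity) (norm_nonneg _)
    (norm_nonneg _) (tnorm_nonneg ι A ω v) (tnorm_nonneg ι A ω w) ?_ ?_)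
  · rw [tnorm_sq]; ring
  · rw [tnorm_sq]; ring

lemma abs_bplus_le (ι A : V →ₗ[ℝ] H) {ω : ℝ} (hω : 0 ≤ ω) (v w : V) :
    |bplus ι A ω v w| ≤ tnorm ι A ω v * tnorm ι A ω w := by
  have h1 : |bplus ι A ω v w| ≤ (ω * ‖ι v‖) * (ω * ‖ι w‖) + ‖A v‖ * ‖A w‖ := by
    have e1 := abs_real_inner_le_norm (ι v) (ι w)
    have e2 := abs_real_inner_le_norm (A v) (A w)
    have := abs_add_le (ω ^ 2 * ⟪ι v, ι w⟫) ⟪A v, A w⟫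
    rw [abs_mul, abs_of_nonneg (sq_nonneg ω)] at this
    unfold bplus
    nlinarith [sq_nonneg ω, abs_nonneg (⟪ι v, ι w⟫), abs_nonneg (⟪A v, A w⟫),
      le_abs_self (⟪A v, A w⟫)]
  refine h1.trans (cs_aux (by positivity) (by positivity) (norm_nonneg _)
    (norm_nonneg _) (tnorm_nonneg ι A ω v) (tnorm_nonneg ι A ω w) ?_ ?_)
  · rw [tnorm_sq]; ring
  · rw [tnorm_sq]; ring

lemma bplus_self (ι A : V →ₗ[ℝ] H) (ω : ℝ) (v : V) :
    bplus ι A ω v v = tnorm ι A ω v ^ 2 := by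
  rw [tnorm_sq]
  simp [bplus, real_inner_self_eq_norm_sq]

lemma bplus_self_add (ι A : V →ₗ[ℝ] H) (ω : ℝ) (x y : V) :
    bplus ι A ω (x + y) (x + y)
      = bplus ι A ω x x + 2 * bplus ι A ω x y + bplus ι A ω y y := by
  simp only [bplus, map_add, inner_add_left, inner_add_right,
    real_inner_comm (ι y) (ι x), real_inner_comm (A y) (A x)]
  ring

lemma tnorm_add_le (ι A : V →ₗ[ℝ] H) {ω : ℝ} (hω : 0 ≤ ω) (v w : V) :
    tnorm ι A ω (v + w) ≤ tnorm ι A ω v + tnorm ι A ω w := by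
  have hbp : bplus ι A ω v w ≤ tnorm ι A ω v * tnorm ι A ω w :=
    (le_abs_self _).trans (abs_bplus_le ι A hω v w)
  have hsq : tnorm ι A ω (v + w) ^ 2 ≤ (tnorm ι A ω v + tnorm ι A ω w) ^ 2 := by
    rw [← bplus_self, bplus_self_add, bplus_self, bplus_self]
    nlinarith
  exact my_le_of_sq_le_sq (tnorm_nonneg _ _ _ _)
    (add_nonneg (tnorm_nonneg _ _ _ _) (tnorm_nonneg _ _ _ _)) hsq

lemma tnorm_smul (ι A : V →ₗ[ℝ] H) (ω c : ℝ) (v : V) :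
    tnorm ι A ω (c • v) = |c| * tnorm ι A ω v := by
  unfold tnorm
  rw [map_smul, map_smul, norm_smul, norm_smul, Real.norm_eq_abs]
  have h : ω ^ 2 * (|c| * ‖ι v‖) ^ 2 + (|c| * ‖A v‖) ^ 2
      = c ^ 2 * (ω ^ 2 * ‖ι v‖ ^ 2 + ‖A v‖ ^ 2) := by
    rw [mul_pow, mul_pow, sq_abs]; ring
  rw [h, Real.sqrt_mul (sq_nonneg c), Real.sqrt_sq_eq_abs]

lemma bform_add_right (ι A : V →ₗ[ℝ] H) (ω : ℝ) (v x y : V) :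
    bform ι A ω v (x + y) = bform ι A ω v x + bform ι A ω v y := by
  simp [bform, map_add, inner_add_right]; ring

lemma bform_sub_right (ι A : V →ₗ[ℝ] H) (ω : ℝ) (v x y : V) :
    bform ι A ω v (x - y) = bform ι A ω v x - bform ι A ω v y := by
  simp [bform, map_sub, inner_sub_right]; ring

lemma bform_smul_right (ι A : V →ₗ[ℝ] H) (ω c : ℝ) (v x : V) :
    bform ι A ω v (c • x) = c * bform ι A ω v x := by
  simp [bform, map_smul, inner_smul_right]; ring

set_option maxHeartbeats 1600000
/-- discrete inf-sup stability (Theorem 4.7). -/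
theorem discrete_infsup
    (ι A : V →ₗ[ℝ] H) (ω : ℝ) (hω : 0 < ω)
    (K : Submodule ℝ H) (hKc : IsClosed (K : Set H))
    (hKV : ∀ v : V, ι v ∈ K ↔ A v = 0)
    (Pi : H →ₗ[ℝ] H) (hPimem : ∀ x : H, Pi x ∈ K)
    (hPifix : ∀ x ∈ K, Pi x = x)
    (hPiorth : ∀ x : H, ∀ y ∈ K, ⟪x - Pi x, y⟫ = 0)
    (hPiV : ∀ v : V, ∃ v' : V, ι v' = Pi (ι v))
    (Vh : Submodule ℝ V)
    -- the H-orthogonal projection Πh onto Kh = Vh ∩ ker A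
    (Pih : H →ₗ[ℝ] H)
    (hPihmem : ∀ x : H, ∃ w ∈ Vh, A w = 0 ∧ ι w = Pih x)
    (hPihfix : ∀ w ∈ Vh, A w = 0 → Pih (ι w) = ι w)
    (hPihorth : ∀ x : H, ∀ w ∈ Vh, A w = 0 → ⟪x - Pih x, ι w⟫ = 0)
    -- energy projection onto Vh
    (P : V →ₗ[ℝ] V) (hPmem : ∀ v : V, P v ∈ Vh)
    (hPorth : ∀ v : V, ∀ wh ∈ Vh, bplus ι A ω (v - P v) wh = 0)
    -- adjoint problem, stability and approximation factors
    (sol : H → V)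
    (hsol : ∀ θ ∈ Kᗮ, ∀ w : V, bform ι A ω w (sol θ) = ⟪ι w, θ⟫)
    (γst : ℝ) (hγstnn : 0 ≤ γst)
    (hγst : ∀ θ ∈ Kᗮ, ω * tnorm ι A ω (sol θ) ≤ γst * ‖θ‖)
    (γapp : ℝ) (hγappnn : 0 ≤ γapp)
    (hγapp : ∀ θ ∈ Kᗮ, ∃ vh ∈ Vh, ω * tnorm ι A ω (sol θ - vh) ≤ γapp * ‖θ‖)
    -- divergence conformity factor
    (γdiv : ℝ) (hγdivnn : 0 ≤ γdiv)
    (hγdiv : ∀ vh ∈ Vh, (∀ wh ∈ Vh, A wh = 0 → ⟪ι vh, ι wh⟫ = 0) →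
      ω * ‖Pi (ι vh)‖ ≤ γdiv * ‖A vh‖) :
    ∀ vh ∈ Vh, tnorm ι A ω vh = 1 →
      ∃ wh ∈ Vh, tnorm ι A ω wh = 1 ∧
        (1 - 2 * (γdiv ^ 2 + γapp)) / (1 + 2 * γst) ≤ |bform ι A ω vh wh| := by
  intro vh hvhVh hvh1
  have hden : (0:ℝ) < 1 + 2 * γst := by linarith
  rcases le_or_gt (1 - 2 * (γdiv ^ 2 + γapp)) 0 with hle | hpos
  · exact ⟨vh, hvhVh, hvh1,
      le_trans (div_nonpos_of_nonpos_of_nonneg hle hden.le) (abs_nonneg _)⟩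
  -- hard case
  obtain ⟨v0, hv0Vh, hv0A, hv0ι⟩ := hPihmem (ι vh)
  set vp := vh - v0 with hvp
  have hvpVh : vp ∈ Vh := Submodule.sub_mem _ hvhVh hv0Vh
  have hvpA : A vp = A vh := by simp [hvp, map_sub, hv0A]
  have hvpι : ι vp = ι vh - Pih (ι vh) := by simp [hvp, map_sub, hv0ι]
  have hvhι : ι vh = ι v0 + ι vp := by rw [hvp, map_sub]; abel
  clear_value vp
  have hvporth : ∀ w ∈ Vh, A w = 0 → ⟪ι vp, ι w⟫ = 0 := by
    intro w hw hAw
    rw [hvpι]; exact hPihorth (ι vh) w hw hAw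
  have e1 : ⟪ι vp, ι v0⟫ = 0 := hvporth v0 hv0Vh hv0A
  set θ := ι vp - Pi (ι vp) with hθdef
  have hθK : θ ∈ Kᗮ := by
    rw [Submodule.mem_orthogonal]
    intro u hu
    rw [real_inner_comm]
    exact hPiorth (ι vp) u hu
  have e2 : ⟪Pi (ι vp), θ⟫ = 0 := by
    rw [real_inner_comm]; exact hPiorth (ι vp) _ (hPimem _)
  have hPvp : ι vp = Pi (ι vp) + θ := by rw [hθdef]; abel
  clear_value θ
  -- norms
  have n1 : ‖ι vp‖ ^ 2 = ‖Pi (ι vp)‖ ^ 2 + ‖θ‖ ^ 2 := by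
    calc ‖ι vp‖ ^ 2 = ‖Pi (ι vp) + θ‖ ^ 2 := by rw [← hPvp]
    _ = ‖Pi (ι vp)‖ ^ 2 + 2 * ⟪Pi (ι vp), θ⟫ + ‖θ‖ ^ 2 := norm_add_sq_real _ _
    _ = ‖Pi (ι vp)‖ ^ 2 + ‖θ‖ ^ 2 := by rw [e2]; ring
  have n2 : ‖ι vh‖ ^ 2 = ‖ι v0‖ ^ 2 + ‖ι vp‖ ^ 2 := by
    calc ‖ι vh‖ ^ 2 = ‖ι v0 + ι vp‖ ^ 2 := by rw [← hvhι]
    _ = ‖ι v0‖ ^ 2 + 2 * ⟪ι v0, ι vp⟫ + ‖ι vp‖ ^ 2 := norm_add_sq_real _ _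
    _ = ‖ι v0‖ ^ 2 + ‖ι vp‖ ^ 2 := by
        rw [real_inner_comm (ι vp) (ι v0), e1]; ring
  have hsum : ω ^ 2 * ‖ι vh‖ ^ 2 + ‖A vh‖ ^ 2 = 1 := by
    have h := tnorm_sq ι A ω vh
    rw [hvh1] at h
    linarith [h.symm]
  have hdiv : ω * ‖Pi (ι vp)‖ ≤ γdiv * ‖A vh‖ := by
    rw [← hvpA]; exact hγdiv vp hvpVh hvporth
  -- adjoint solution
  set ξ := sol θ with hξdef
  have hbξ : bform ι A ω vh ξ = ‖θ‖ ^ 2 := by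
    rw [hξdef, hsol θ hθK vh, hvhι, inner_add_left]
    have hv0K : ι v0 ∈ K := (hKV v0).mpr hv0A
    have h0 : ⟪ι v0, θ⟫ = 0 :=
      (Submodule.mem_orthogonal K θ).mp hθK (ι v0) hv0K
    have h1 : ⟪ι vp, θ⟫ = ‖θ‖ ^ 2 := by
      rw [hPvp, inner_add_left, e2, real_inner_self_eq_norm_sq]; ring
    rw [h0, h1]; ring
  have hst : ω * tnorm ι A ω ξ ≤ γst * ‖θ‖ := hγst θ hθK
  obtain ⟨zh, hzhVh, hzh⟩ := hγapp θ hθK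
  rw [← hξdef] at hzh
  clear_value ξ
  set pξ := P ξ with hpξdef
  have hpξVh : pξ ∈ Vh := hPmem ξ
  have o1 : bplus ι A ω (ξ - pξ) (pξ - zh) = 0 := by
    rw [hpξdef]; exact hPorth ξ (pξ - zh) (Submodule.sub_mem _ hpξVh hzhVh)
  have o2 : bplus ι A ω (ξ - pξ) pξ = 0 := by
    rw [hpξdef]; exact hPorth ξ pξ hpξVh
  clear_value pξ
  -- energy projection best-approximation
  have hpy1 : tnorm ι A ω (ξ - pξ) ≤ tnorm ι A ω (ξ - zh) := by
    have dec : ξ - zh = (ξ - pξ) + (pξ - zh) := by abel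
    have hsq : tnorm ι A ω (ξ - zh) ^ 2
        = tnorm ι A ω (ξ - pξ) ^ 2 + tnorm ι A ω (pξ - zh) ^ 2 := by
      rw [← bplus_self, dec, bplus_self_add, o1, bplus_self, bplus_self]; ring
    exact my_le_of_sq_le_sq (tnorm_nonneg _ _ _ _) (tnorm_nonneg _ _ _ _)
      (by nlinarith [sq_nonneg (tnorm ι A ω (pξ - zh))])
  have hpy2 : tnorm ι A ω pξ ≤ tnorm ι A ω ξ := by
    have dec : ξ = (ξ - pξ) + pξ := by abel
    have hsq : tnorm ι A ω ξ ^ 2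
        = tnorm ι A ω (ξ - pξ) ^ 2 + tnorm ι A ω pξ ^ 2 := by
      conv_lhs => rw [← bplus_self, dec, bplus_self_add]
      rw [o2, bplus_self, bplus_self]; ring
    exact my_le_of_sq_le_sq (tnorm_nonneg _ _ _ _) (tnorm_nonneg _ _ _ _)
      (by nlinarith [sq_nonneg (tnorm ι A ω (ξ - pξ))])
  -- the test function
  set wh := vp - v0 + (2 * ω ^ 2) • pξ with hwhdef
  have hwhVh : wh ∈ Vh :=
    Submodule.add_mem _ (Submodule.sub_mem _ hvpVh hv0Vh)
      (Submodule.smul_mem _ _ hpξVh)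
  clear_value wh
  -- compute bform vh wh
  have i1 : ⟪ι vh, ι vp⟫ = ‖ι vp‖ ^ 2 := by
    rw [hvhι, inner_add_left, real_inner_comm (ι vp) (ι v0), e1,
      real_inner_self_eq_norm_sq]; ring
  have i2 : ⟪ι vh, ι v0⟫ = ‖ι v0‖ ^ 2 := by
    rw [hvhι, inner_add_left, e1, real_inner_self_eq_norm_sq]; ring
  have hbvp : bform ι A ω vh vp = -ω ^ 2 * ‖ι vp‖ ^ 2 + ‖A vh‖ ^ 2 := by
    unfold bform
    rw [i1, hvpA, real_inner_self_eq_norm_sq]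
  have hbv0 : bform ι A ω vh v0 = -ω ^ 2 * ‖ι v0‖ ^ 2 := by
    unfold bform
    rw [i2, hv0A, inner_zero_right]; ring
  have hb1 : bform ι A ω vh (vp - v0)
      = -(ω ^ 2) * (‖ι vp‖ ^ 2 - ‖ι v0‖ ^ 2) + ‖A vh‖ ^ 2 := by
    rw [bform_sub_right, hbvp, hbv0]; ring
  have hb2 : bform ι A ω vh pξ = ‖θ‖ ^ 2 - bform ι A ω vh (ξ - pξ) := by
    have := bform_sub_right ι A ω vh ξ pξ
    rw [hbξ] at this
    linarith
  have hbw : bform ι A ω vh wh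
      = bform ι A ω vh (vp - v0) + (2 * ω ^ 2) * bform ι A ω vh pξ := by
    rw [hwhdef, bform_add_right, bform_smul_right]
  have heq : bform ι A ω vh wh
      = 1 - 2 * (ω ^ 2 * ‖Pi (ι vp)‖ ^ 2)
        - 2 * ω ^ 2 * bform ι A ω vh (ξ - pξ) := by
    linear_combination hbw + hb1 + (2 * ω ^ 2) * hb2 + (-(2 * ω ^ 2)) * n1
      + (-(ω ^ 2)) * n2 + hsum
  -- scalar bounds
  have hAle : ‖A vh‖ ^ 2 ≤ 1 := by
    nlinarith [mul_nonneg (sq_nonneg ω) (sq_nonneg ‖ι vh‖)]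
  have hP2 : ω ^ 2 * ‖Pi (ι vp)‖ ^ 2 ≤ γdiv ^ 2 := by
    nlinarith [hdiv, mul_nonneg hω.le (norm_nonneg (Pi (ι vp))),
      mul_nonneg hγdivnn (norm_nonneg (A vh))]
  have hc1 : ω * ‖θ‖ ≤ 1 := by
    have t1 : ‖θ‖ ^ 2 ≤ ‖ι vh‖ ^ 2 := by
      nlinarith [sq_nonneg ‖Pi (ι vp)‖, sq_nonneg ‖ι v0‖]
    have t2 := mul_le_mul_of_nonneg_left t1 (sq_nonneg ω)
    have hsq : (ω * ‖θ‖) ^ 2 ≤ 1 ^ 2 := by nlinarith [sq_nonneg ‖A vh‖]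
    exact my_le_of_sq_le_sq (by positivity) zero_le_one hsq
  have hRabs : |bform ι A ω vh (ξ - pξ)| ≤ tnorm ι A ω (ξ - pξ) := by
    have := abs_bform_le ι A hω.le vh (ξ - pξ)
    rw [hvh1] at this
    linarith
  have hRω : ω * |bform ι A ω vh (ξ - pξ)| ≤ γapp * ‖θ‖ := by
    calc ω * |bform ι A ω vh (ξ - pξ)| ≤ ω * tnorm ι A ω (ξ - pξ) :=
          mul_le_mul_of_nonneg_left hRabs hω.le
    _ ≤ ω * tnorm ι A ω (ξ - zh) := mul_le_mul_of_nonneg_left hpy1 hω.le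
    _ ≤ γapp * ‖θ‖ := hzh
  have hRbound : 2 * ω ^ 2 * bform ι A ω vh (ξ - pξ) ≤ 2 * γapp := by
    have h1 : ω ^ 2 * |bform ι A ω vh (ξ - pξ)| ≤ γapp := by
      have a := mul_le_mul_of_nonneg_left hRω hω.le
      have b := mul_le_mul_of_nonneg_left hc1 hγappnn
      nlinarith
    nlinarith [le_abs_self (bform ι A ω vh (ξ - pξ)), sq_nonneg ω,
      abs_nonneg (bform ι A ω vh (ξ - pξ))]
  have hlow : 1 - 2 * (γdiv ^ 2 + γapp) ≤ bform ι A ω vh wh := by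
    rw [heq]; linarith
  -- norm of the test function
  have hT1 : tnorm ι A ω (vp - v0) = 1 := by
    have hn : ‖ι vp - ι v0‖ ^ 2 = ‖ι vp‖ ^ 2 + ‖ι v0‖ ^ 2 := by
      rw [norm_sub_sq_real, e1]; ring
    have hq : ω ^ 2 * ‖ι (vp - v0)‖ ^ 2 + ‖A (vp - v0)‖ ^ 2 = 1 := by
      rw [map_sub, map_sub, hvpA, hv0A, sub_zero, hn]
      linear_combination (-(ω ^ 2)) * n2 + hsum
    rw [tnorm, hq, Real.sqrt_one]
  have hT2 : tnorm ι A ω ((2 * ω ^ 2) • pξ) ≤ 2 * γst := by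
    rw [tnorm_smul, abs_of_nonneg (by positivity : (0:ℝ) ≤ 2 * ω ^ 2)]
    calc (2 * ω ^ 2) * tnorm ι A ω pξ ≤ (2 * ω ^ 2) * tnorm ι A ω ξ :=
          mul_le_mul_of_nonneg_left hpy2 (by positivity)
    _ = (2 * ω) * (ω * tnorm ι A ω ξ) := by ring
    _ ≤ (2 * ω) * (γst * ‖θ‖) := mul_le_mul_of_nonneg_left hst (by positivity)
    _ = 2 * γst * (ω * ‖θ‖) := by ring
    _ ≤ 2 * γst * 1 := mul_le_mul_of_nonneg_left hc1 (by positivity)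
    _ = 2 * γst := by ring
  have htw : tnorm ι A ω wh ≤ 1 + 2 * γst := by
    calc tnorm ι A ω wh
        = tnorm ι A ω ((vp - v0) + (2 * ω ^ 2) • pξ) := by rw [hwhdef]
    _ ≤ tnorm ι A ω (vp - v0) + tnorm ι A ω ((2 * ω ^ 2) • pξ) :=
          tnorm_add_le ι A hω.le _ _
    _ ≤ 1 + 2 * γst := by rw [hT1]; linarith
  have hBle : bform ι A ω vh wh ≤ tnorm ι A ω wh := by
    have h := abs_bform_le ι A hω.le vh wh
    rw [hvh1, one_mul] at h
    linarith [le_abs_self (bform ι A ω vh wh)]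
  have htpos : 0 < tnorm ι A ω wh := lt_of_lt_of_le hpos (hlow.trans hBle)
  have hBpos : 0 < bform ι A ω vh wh := lt_of_lt_of_le hpos hlow
  -- normalize
  refine ⟨(tnorm ι A ω wh)⁻¹ • wh, Submodule.smul_mem _ _ hwhVh, ?_, ?_⟩
  · rw [tnorm_smul, abs_inv, abs_of_pos htpos, inv_mul_cancel₀ htpos.ne']
  · rw [bform_smul_right]
    have hprodpos : 0 < (tnorm ι A ω wh)⁻¹ * bform ι A ω vh wh :=
      mul_pos (inv_pos.mpr htpos) hBpos
    rw [abs_of_pos hprodpos]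
    have hdd : (1 - 2 * (γdiv ^ 2 + γapp)) / (1 + 2 * γst)
        ≤ bform ι A ω vh wh / tnorm ι A ω wh :=
      div_le_div₀ hBpos.le hlow htpos htw
    rw [inv_mul_eq_div]
    exact hdd
end
end
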